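/- arXiv:1601.03693 — 4 statements merged into one kernel-verified Lean document; each statement's English description precedes it below -/
import Mathlib

section
/- Let (G, G_•) be a filtered group of degree k and Γ ≤ G a subgroup, with π_Γ: G → G/Γ the canonical projection to left cosets. Then the coset space X = G/Γ with cube sets C^n(X) = {π_Γ ∘ q : q ∈ C^n(G_•)} is a k-step nilspace. -/
open Finset

/-- Embedding of the discrete cube `{0,1}^n` into `ℤ^n`. -/
def cubeEmb {n : ℕ} (v : Fin n → Bool) : Fin n → ℤ := fun i => if v i then 1 else 0

/-- A discrete-cube morphism: the restriction to `{0,1}^m` of an affine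
homomorphism `ℤ^m → ℤ^n`. -/
def IsCubeMorphism {m n : ℕ} (φ : (Fin m → Bool) → (Fin n → Bool)) : Prop :=
  ∃ (M : (Fin m → ℤ) →+ (Fin n → ℤ)) (t : Fin n → ℤ),
    ∀ v : Fin m → Bool, cubeEmb (φ v) = M (cubeEmb v) + t

/-- A face of `{0,1}^n` of codimension `c`: fix `c` coordinates. -/
def IsFaceOfCodim {n : ℕ} (F : Set (Fin n → Bool)) (c : ℕ) : Prop :=
  ∃ (I : Finset (Fin n)) (x : Fin n → Bool), I.card = c ∧
    F = {v : Fin n → Bool | ∀ i ∈ I, v i = x i}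

/-- An `m`-face map into `{0,1}^n`: an injective cube morphism whose image is
an `m`-dimensional face. -/
def IsFaceMap {m n : ℕ} (φ : (Fin m → Bool) → (Fin n → Bool)) : Prop :=
  IsCubeMorphism φ ∧ Function.Injective φ ∧ IsFaceOfCodim (Set.range φ) (n - m)

/-- The number of coordinates of `v` equal to `1`. -/
def weight {n : ℕ} (v : Fin n → Bool) : ℕ := (Finset.univ.filter fun i => v i = true).card

/-- A (pre)filtration on a group: a decreasing chain of subgroups with
`[G_i, G_j] ⊆ G_{i+j}`. -/
def IsGroupFiltration {G : Type*} [Group G] (Gf : ℕ → Subgroup G) : Prop :=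
  (∀ i, Gf (i + 1) ≤ Gf i) ∧
  (∀ i j : ℕ, ∀ x ∈ Gf i, ∀ y ∈ Gf j, x⁻¹ * y⁻¹ * x * y ∈ Gf (i + j))

open Classical in
/-- The face-group element `g^F`: equal to `g` on `F` and to the identity elsewhere. -/
noncomputable def faceEl {G : Type*} [Group G] {n : ℕ} (F : Set (Fin n → Bool)) (g : G) :
    (Fin n → Bool) → G :=
  fun v => if v ∈ F then g else 1

/-- The Host–Kra cube group `C^n(G_•)`: the subgroup of `G^{{0,1}^n}` generated by
the face groups. -/
noncomputable def hkCubes {G : Type*} [Group G] (Gf : ℕ → Subgroup G) (n : ℕ) :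
    Subgroup ((Fin n → Bool) → G) :=
  Subgroup.closure { f | ∃ (c : ℕ) (F : Set (Fin n → Bool)) (g : G),
    IsFaceOfCodim F c ∧ g ∈ Gf c ∧ f = faceEl F g }

/-- Restriction of a map on `{0,1}^{n+1}` to the lower face `{v : v_j = 0}`,
viewed as a map on `{0,1}^n`. -/
def lowerFaceRestr {X : Type*} {n : ℕ} (q : (Fin (n + 1) → Bool) → X) (j : Fin (n + 1)) :
    (Fin n → Bool) → X :=
  fun v => q (j.insertNth false v)

/-- An `(n+1)`-corner: every restriction to an `n`-face containing `0^{n+1}` is a cube. -/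
def IsNSCorner {X : Type*} (C : ∀ n, ((Fin n → Bool) → X) → Prop) (n : ℕ)
    (q' : (Fin (n + 1) → Bool) → X) : Prop :=
  ∀ j : Fin (n + 1), C n (lowerFaceRestr q' j)

/-- `q` is a completion of the corner `q'`. -/
def IsNSCompletion {X : Type*} (C : ∀ n, ((Fin n → Bool) → X) → Prop) (n : ℕ)
    (q' q : (Fin (n + 1) → Bool) → X) : Prop :=
  C (n + 1) q ∧ ∀ v : Fin (n + 1) → Bool, v ≠ (fun _ => true) → q v = q' v

/-- The nilspace axioms: composition, ergodicity and corner completion. -/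
def IsNilspace {X : Type*} (C : ∀ n, ((Fin n → Bool) → X) → Prop) : Prop :=
  (∀ (m n : ℕ) (φ : (Fin m → Bool) → (Fin n → Bool)), IsCubeMorphism φ →
      ∀ q, C n q → C m (q ∘ φ)) ∧
  (∀ q : (Fin 1 → Bool) → X, C 1 q) ∧
  (∀ n (q' : (Fin (n + 1) → Bool) → X), IsNSCorner C n q' → ∃ q, IsNSCompletion C n q' q)

/-- A `k`-step nilspace: a nilspace in which every `(k+1)`-corner has a unique
completion. -/
def IsKStepNilspace {X : Type*} (C : ∀ n, ((Fin n → Bool) → X) → Prop) (k : ℕ) : Prop :=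
  IsNilspace C ∧
  ∀ q' : (Fin (k + 1) → Bool) → X, IsNSCorner C k q' → ∃! q, IsNSCompletion C k q' q

/-- The Gray-code alternating product `σ_n`. -/
def graySigma {G : Type*} [Group G] : (n : ℕ) → ((Fin n → Bool) → G) → G
  | 0, g => g (fun i => i.elim0)
  | n + 1, g => (graySigma n (fun v => g (Fin.snoc v true)))⁻¹ *
      graySigma n (fun v => g (Fin.snoc v false))

/-- The difference operator `∂_h g (x) = g(x)⁻¹ g(xh)`. -/
def mulDiff {H G : Type*} [Group H] [Group G] (h : H) (g : H → G) : H → G :=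
  fun x => (g x)⁻¹ * g (x * h)

/-- `g : H → G` is a polynomial map adapted to the filtrations `H_•, G_•`. -/
def IsPolyMap {H G : Type*} [Group H] [Group G] (Hf : ℕ → Subgroup H)
    (Gf : ℕ → Subgroup G) (g : H → G) : Prop :=
  ∀ (n : ℕ) (d : Fin n → ℕ) (h : Fin n → H), (∀ j, h j ∈ Hf (d j)) →
    ∀ x : H, ((List.ofFn h).foldr mulDiff g) x ∈ Gf (∑ j, d j)

/-- The `k`-arrow `⟨q_0, q_1⟩_k : {0,1}^{n+k} → X`. -/
def arrowMap {X : Type*} {n k : ℕ} (q0 q1 : (Fin n → Bool) → X) :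
    (Fin (n + k) → Bool) → X :=
  fun v =>
    if ∀ j : Fin k, v (Fin.natAdd n j) = true
    then q1 (fun i => v (Fin.castAdd k i))
    else q0 (fun i => v (Fin.castAdd k i))


/-!
Every element of `C^n(G_•)` is an ordered product, along a linear extension of the order of the
cube, of upper-face elements `(γ w)^{[w, ⊤]}` with `γ w ∈ G_{|w|}`: a new factor can be commuted
into place, since the commutators it creates live on higher vertices. Evaluating such a product
gives `c v = (∏_{w < v} γ w) * γ v`, so a cube that is `Γ`-valued strictly below `v` takes a
value in `Γ G_{|v|}` at `v`. Corners are then completed greedily, vertex by vertex in order of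
weight, each value being corrected by an element of `G_{|v|}` found by comparing with the cube of
the corner on a lower face through `v`; for `(k+1)`-corners the same fact with `G_{k+1} = 1`
gives uniqueness. Composition holds because every coordinate of a cube morphism is constant or a
possibly negated coordinate, so preimages of faces are faces of no larger codimension.
-/

section CubeOrder

variable {n : ℕ}

lemma weight_lt_weight {u v : Fin n → Bool} (h : u < v) : weight u < weight v := by
  obtain ⟨i, hi⟩ := (Pi.lt_def.1 h).2
  have hui : u i = false ∧ v i = true := by
    revert hi; cases u i <;> cases v i <;> decide
  refine card_lt_card <| (ssubset_iff_of_subset fun j hj => ?_).2 ⟨i, ?_⟩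
  · simp_all [Bool.le_iff_imp.1 (h.le j)]
  · simp [hui]

lemma weight_sup_le (u v : Fin n → Bool) : weight (u ⊔ v) ≤ weight u + weight v :=
  (card_le_card fun i hi => by simpa [Bool.or_eq_true] using hi).trans (card_union_le _ _)

lemma weight_top : weight (⊤ : Fin n → Bool) = n := by simp [weight]

end CubeOrder

namespace IsGroupFiltration

variable {G : Type*} [Group G] {Gf : ℕ → Subgroup G}

lemma antitone (hGf : IsGroupFiltration Gf) : Antitone Gf := antitone_nat_of_succ_le hGf.1

lemma normal (hGf : IsGroupFiltration Gf) (h1 : Gf 1 = ⊤) (i : ℕ) : (Gf i).Normal where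
  conj_mem x hx g := by
    have hcomm : x⁻¹ * (g⁻¹)⁻¹ * x * g⁻¹ ∈ Gf i := hGf.1 i (hGf.2 i 1 x hx g⁻¹ (h1 ▸ trivial))
    simpa [mul_assoc] using mul_mem hx hcomm

end IsGroupFiltration

section FaceElements

variable {G : Type*} [Group G] {n : ℕ}

def cubeFace (I : Finset (Fin n)) (x : Fin n → Bool) : Set (Fin n → Bool) :=
  {v | ∀ i ∈ I, v i = x i}

lemma faceEl_mul (F : Set (Fin n → Bool)) (a b : G) :
    faceEl F a * faceEl F b = faceEl F (a * b) := by
  ext v; by_cases h : v ∈ F <;> simp [faceEl, h]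

lemma faceEl_one (F : Set (Fin n → Bool)) : faceEl F (1 : G) = 1 := by
  ext v; simp [faceEl]

lemma faceEl_inv (F : Set (Fin n → Bool)) (a : G) : (faceEl F a)⁻¹ = faceEl F a⁻¹ := by
  ext v; by_cases h : v ∈ F <;> simp [faceEl, h]

lemma faceEl_empty (a : G) : faceEl (∅ : Set (Fin n → Bool)) a = 1 := by
  ext v; simp [faceEl]

lemma faceEl_comp {m : ℕ} (F : Set (Fin n → Bool)) (a : G) (φ : (Fin m → Bool) → Fin n → Bool) :
    faceEl F a ∘ φ = faceEl (φ ⁻¹' F) a :=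
  rfl

lemma faceEl_diff {A B : Set (Fin n → Bool)} (hBA : B ⊆ A) (a : G) :
    faceEl (A \ B) a = faceEl A a * faceEl B a⁻¹ := by
  ext v
  by_cases hB : v ∈ B
  · simp [faceEl, hB, hBA hB]
  · by_cases hA : v ∈ A <;> simp [faceEl, hA, hB]

lemma faceEl_Ici_mul_faceEl_Ici (u w : Fin n → Bool) (a b : G) :
    faceEl (Set.Ici u) a * faceEl (Set.Ici w) b =
      faceEl (Set.Ici w) b * faceEl (Set.Ici u) a *
        faceEl (Set.Ici (u ⊔ w)) (a⁻¹ * b⁻¹ * a * b) := by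
  ext p
  by_cases hu : u ≤ p <;> by_cases hw : w ≤ p <;> simp [faceEl, hu, hw, mul_assoc]

lemma cubeFace_eq_Ici {I : Finset (Fin n)} {x : Fin n → Bool} (hx : ∀ i ∈ I, x i = true) :
    cubeFace I x = Set.Ici fun i => decide (i ∈ I) := by
  ext v
  simp only [cubeFace, Set.mem_ofPred_eq, Set.mem_Ici, Pi.le_def, Bool.le_iff_imp,
    decide_eq_true_eq]
  exact forall₂_congr fun i hi => by rw [hx i hi]

lemma weight_indicator (I : Finset (Fin n)) : weight (fun i => decide (i ∈ I)) = I.card := by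
  simp [weight]

lemma isFaceOfCodim_Ici (v : Fin n → Bool) : IsFaceOfCodim (Set.Ici v) (weight v) := by
  refine ⟨univ.filter (v · = true), ⊤, rfl, ?_⟩
  ext w
  simp [Pi.le_def, Bool.le_iff_imp]

lemma faceEl_cubeFace_mem_hkCubes {Gf : ℕ → Subgroup G} (hGf : IsGroupFiltration Gf)
    {I : Finset (Fin n)} {c : ℕ} (hI : I.card ≤ c) (x : Fin n → Bool) {g : G} (hg : g ∈ Gf c) :
    faceEl (cubeFace I x) g ∈ hkCubes Gf n :=
  Subgroup.subset_closure ⟨I.card, _, g, ⟨I, x, rfl, rfl⟩, hGf.antitone hI hg, rfl⟩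

lemma faceEl_Ici_mem_hkCubes {Gf : ℕ → Subgroup G} {v : Fin n → Bool} {g : G}
    (hg : g ∈ Gf (weight v)) : faceEl (Set.Ici v) g ∈ hkCubes Gf n :=
  Subgroup.subset_closure ⟨_, _, g, isFaceOfCodim_Ici v, hg, rfl⟩

end FaceElements

section CubeMorphisms

variable {m n : ℕ} {φ : (Fin m → Bool) → Fin n → Bool}

/-- The coordinate `i` of `φ` is an affine function `∑ a_j v_j + b` taking values in `{0, 1}`;
evaluating at `∅`, `{j}` and `{j, j₀}` leaves at most one nonzero `a_j`. -/
lemma IsCubeMorphism.apply_eq (hφ : IsCubeMorphism φ) (i : Fin n) :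
    (∃ b, ∀ v, φ v i = b) ∨ ∃ j r, ∀ v, φ v i = (v j ^^ r) := by
  obtain ⟨M, t, hMt⟩ := hφ
  set a : Fin m → ℤ := fun j => M (Pi.single j 1) i
  have hval : ∀ v, (if φ v i then 1 else 0 : ℤ) = (∑ j, if v j then a j else 0) + t i := by
    intro v
    have hM : M (cubeEmb v) i = ∑ j, if v j then a j else 0 := by
      rw [← univ_sum_single (cubeEmb v), map_sum, Finset.sum_apply]
      exact sum_congr rfl fun j _ => by cases hv : v j <;> simp [cubeEmb, a, hv]
    rw [← hM, ← Pi.add_apply, ← hMt]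
    rfl
  have h01 : ∀ S : Finset (Fin m), ∑ j ∈ S, a j + t i = 0 ∨ ∑ j ∈ S, a j + t i = 1 := by
    intro S
    have := hval fun j => decide (j ∈ S)
    simp only [decide_eq_true_eq, Finset.sum_ite_mem, univ_inter] at this
    split_ifs at this <;> omega
  have ht := h01 ∅
  simp only [sum_empty, zero_add] at ht
  by_cases hall : ∀ j, a j = 0
  · refine .inl ⟨decide (t i = 1), fun v => ?_⟩
    have hv := hval v
    simp only [hall, ite_self, sum_const_zero, zero_add] at hv
    cases h : φ v i <;> simp [h] at hv ⊢ <;> omega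
  · push Not at hall
    obtain ⟨j₀, hj₀⟩ := hall
    have hothers : ∀ j ≠ j₀, a j = 0 := fun j hj => by
      have hj' := h01 {j}
      have hj₀' := h01 {j₀}
      have hjj₀ := h01 {j, j₀}
      rw [sum_singleton] at hj' hj₀'
      rw [sum_pair hj] at hjj₀
      omega
    refine .inr ⟨j₀, decide (t i = 1), fun v => ?_⟩
    have hφv := hval v
    rw [sum_eq_single j₀ (fun j _ hj => by simp [hothers j hj]) (by simp)] at hφv
    have hj₀' := h01 {j₀}
    rw [sum_singleton] at hj₀'
    cases h : φ v i <;> cases hv : v j₀ <;> simp [h, hv] at hφv ⊢ <;> omega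

lemma cubeFace_insert (i : Fin n) (I : Finset (Fin n)) (x : Fin n → Bool) :
    cubeFace (insert i I) x = {v | v i = x i} ∩ cubeFace I x := by
  ext v; simp [cubeFace]

lemma cubeFace_inter_eq (J : Finset (Fin n)) (y : Fin n → Bool) (j : Fin n) (s : Bool) :
    cubeFace J y ∩ {v | v j = s} = ∅ ∨
      cubeFace J y ∩ {v | v j = s} = cubeFace (insert j J) (Function.update y j s) := by
  by_cases h : j ∈ J ∧ y j ≠ s
  · refine .inl (Set.eq_empty_of_forall_notMem fun v hv => h.2 ?_)
    exact (hv.1 j h.1).symm.trans hv.2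
  · refine .inr (Set.ext fun v => ?_)
    simp only [cubeFace, Set.mem_inter_iff, Set.mem_ofPred_eq, forall_mem_insert,
      Function.update_self]
    constructor
    · rintro ⟨hJ, hj⟩
      refine ⟨hj, fun i hi => ?_⟩
      rcases eq_or_ne i j with rfl | hij
      · simp [hj]
      · simpa [hij] using hJ i hi
    · rintro ⟨hj, hJ⟩
      refine ⟨fun i hi => ?_, hj⟩
      rcases eq_or_ne i j with rfl | hij
      · rw [hj]; tauto
      · simpa [hij] using hJ i hi

lemma IsCubeMorphism.preimage_cubeFace (hφ : IsCubeMorphism φ) (I : Finset (Fin n))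
    (x : Fin n → Bool) :
    φ ⁻¹' cubeFace I x = ∅ ∨
      ∃ J y, J.card ≤ I.card ∧ φ ⁻¹' cubeFace I x = cubeFace J y := by
  induction I using Finset.induction_on with
  | empty => exact .inr ⟨∅, fun _ => false, le_rfl, by ext; simp [cubeFace]⟩
  | insert i I hi ih =>
    rw [cubeFace_insert, Set.preimage_inter, card_insert_of_notMem hi]
    rcases ih with h | ⟨J, y, hJ, h⟩
    · exact .inl (by rw [h, Set.inter_empty])
    rw [h]
    rcases hφ.apply_eq i with ⟨b, hb⟩ | ⟨j, r, hjr⟩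
    · by_cases hbx : b = x i
      · exact .inr ⟨J, y, by omega, by ext v; simp [hb, hbx]⟩
      · exact .inl (by ext v; simp [hb, hbx])
    · have hpre : φ ⁻¹' {v | v i = x i} = {v | v j = (x i ^^ r)} := by
        ext v; simp only [Set.mem_preimage, Set.mem_ofPred_eq, hjr]
        cases v j <;> cases r <;> cases x i <;> decide
      rw [hpre, Set.inter_comm]
      rcases cubeFace_inter_eq J y j (x i ^^ r) with h' | h'
      · exact .inl h'
      · exact .inr ⟨_, _, (card_insert_le _ _).trans (by omega), h'⟩

lemma IsCubeMorphism.comp_mem_hkCubes {G : Type*} [Group G] {Gf : ℕ → Subgroup G}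
    (hGf : IsGroupFiltration Gf) (hφ : IsCubeMorphism φ) {q : (Fin n → Bool) → G}
    (hq : q ∈ hkCubes Gf n) : q ∘ φ ∈ hkCubes Gf m := by
  induction hq using Subgroup.closure_induction with
  | mem f hf =>
    obtain ⟨c, F, g, ⟨I, x, rfl, rfl⟩, hg, rfl⟩ := hf
    rw [faceEl_comp, ← cubeFace]
    rcases hφ.preimage_cubeFace I x with h | ⟨J, y, hJ, h⟩
    · rw [h, faceEl_empty]; exact one_mem _
    · rw [h]; exact faceEl_cubeFace_mem_hkCubes hGf hJ y hg
  | one => exact one_mem _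
  | mul a b _ _ ha hb => exact mul_mem ha hb
  | inv a _ ha => exact inv_mem ha

lemma isCubeMorphism_removeNth (j : Fin (n + 1)) :
    IsCubeMorphism (Fin.removeNth j : (Fin (n + 1) → Bool) → Fin n → Bool) :=
  ⟨AddMonoidHom.mk' (Fin.removeNth j) fun _ _ => rfl, 0, fun _ => (add_zero _).symm⟩

end CubeMorphisms

lemma List.filter_le_eq_filter_lt_append {α : Type*} [PartialOrder α] [DecidableLE α]
    [DecidableLT α] {l : List α} (hl : l.Pairwise fun a b => ¬ b < a) (hnd : l.Nodup) {v : α}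
    (hv : v ∈ l) : l.filter (· ≤ v) = l.filter (· < v) ++ [v] := by
  induction l with
  | nil => cases hv
  | cons w l ih =>
    obtain ⟨hw, hl⟩ := List.pairwise_cons.1 hl
    obtain ⟨hwl, hnd⟩ := List.nodup_cons.1 hnd
    rcases List.mem_cons.1 hv with rfl | hv
    · have hle : ∀ u ∈ l, ¬ u ≤ v := fun u hu hle =>
        hw u hu (lt_of_le_of_ne hle fun h => hwl (h ▸ hu))
      have hle' : l.filter (· ≤ v) = [] :=
        List.filter_eq_nil_iff.2 fun u hu => by simpa using hle u hu
      have hlt' : l.filter (· < v) = [] :=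
        List.filter_eq_nil_iff.2 fun u hu => by simpa using fun h : u < v => hle u hu h.le
      simp [hle', hlt']
    · have hwv : w ≠ v := fun h => hwl (h ▸ hv)
      by_cases hwv' : w < v <;> simp [ih hl hnd hv, le_iff_lt_or_eq, hwv, hwv']

section UpperFaceForm

variable {G : Type*} [Group G] {Gf : ℕ → Subgroup G} {n : ℕ}

open scoped Classical

noncomputable def upperFaceProd (l : List (Fin n → Bool)) (γ : (Fin n → Bool) → G) :
    (Fin n → Bool) → G :=
  (l.map fun w => faceEl (Set.Ici w) (γ w)).prod

lemma upperFaceProd_cons (w : Fin n → Bool) (l : List (Fin n → Bool)) (γ : (Fin n → Bool) → G) :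
    upperFaceProd (w :: l) γ = faceEl (Set.Ici w) (γ w) * upperFaceProd l γ :=
  List.prod_cons

lemma upperFaceProd_apply (l : List (Fin n → Bool)) (γ : (Fin n → Bool) → G)
    (v : Fin n → Bool) : upperFaceProd l γ v = ((l.filter (· ≤ v)).map γ).prod := by
  induction l with
  | nil => rfl
  | cons w l ih =>
    rw [upperFaceProd_cons, Pi.mul_apply, ih, List.filter_cons]
    by_cases hw : w ≤ v <;> simp [faceEl, hw]

def HasUpperFaceForm (Gf : ℕ → Subgroup G) (l : List (Fin n → Bool))
    (c : (Fin n → Bool) → G) : Prop :=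
  ∃ γ : (Fin n → Bool) → G, (∀ v, γ v ∈ Gf (weight v)) ∧ c = upperFaceProd l γ

lemma hasUpperFaceForm_one (l : List (Fin n → Bool)) : HasUpperFaceForm Gf l 1 :=
  ⟨1, fun _ => one_mem _, by simp [upperFaceProd, faceEl_one]⟩

lemma HasUpperFaceForm.cons {l : List (Fin n → Bool)} {c : (Fin n → Bool) → G}
    (h : HasUpperFaceForm Gf l c) {w : Fin n → Bool} (hw : w ∉ l) {g : G}
    (hg : g ∈ Gf (weight w)) : HasUpperFaceForm Gf (w :: l) (faceEl (Set.Ici w) g * c) := by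
  obtain ⟨γ, hγ, rfl⟩ := h
  refine ⟨Function.update γ w g, fun v => ?_, ?_⟩
  · rcases eq_or_ne v w with rfl | hv
    · simpa using hg
    · simpa [hv] using hγ v
  · have hl : upperFaceProd l (Function.update γ w g) = upperFaceProd l γ :=
      congrArg List.prod <| List.map_congr_left fun u hu => by
        rw [Function.update_of_ne (ne_of_mem_of_not_mem hu hw)]
    rw [upperFaceProd_cons, Function.update_self, hl]

/-- The new factor is commuted past the head `w` of the list; the commutator this creates sits
on `u ⊔ w`, a vertex further down the list, and is absorbed recursively. -/
lemma HasUpperFaceForm.faceEl_Ici_mul (hGf : IsGroupFiltration Gf) {l : List (Fin n → Bool)}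
    (hl : l.Pairwise fun a b => ¬ b < a) (hnd : l.Nodup) (hup : ∀ u ∈ l, ∀ w, u ≤ w → w ∈ l)
    {c : (Fin n → Bool) → G} (h : HasUpperFaceForm Gf l c) {u : Fin n → Bool} (hu : u ∈ l)
    {g : G} (hg : g ∈ Gf (weight u)) : HasUpperFaceForm Gf l (faceEl (Set.Ici u) g * c) := by
  induction l generalizing u g c with
  | nil => cases hu
  | cons w l ih =>
    obtain ⟨γ, hγ, rfl⟩ := h
    obtain ⟨hw, hl⟩ := List.pairwise_cons.1 hl
    obtain ⟨hwl, hnd⟩ := List.nodup_cons.1 hnd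
    have hup' : ∀ x ∈ l, ∀ y, x ≤ y → y ∈ l := fun x hx y hxy => by
      rcases List.mem_cons.1 (hup x (List.mem_cons_of_mem w hx) y hxy) with rfl | hy
      · exact absurd (lt_of_le_of_ne hxy fun h => hwl (h ▸ hx)) (hw x hx)
      · exact hy
    have hform : HasUpperFaceForm Gf l (upperFaceProd l γ) := ⟨γ, hγ, rfl⟩
    rw [upperFaceProd_cons, ← mul_assoc]
    rcases List.mem_cons.1 hu with rfl | hu
    · rw [faceEl_mul]
      exact hform.cons hwl (mul_mem hg (hγ u))
    · have hcomm : g⁻¹ * (γ w)⁻¹ * g * γ w ∈ Gf (weight (u ⊔ w)) :=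
        hGf.antitone (weight_sup_le u w) (hGf.2 _ _ g hg (γ w) (hγ w))
      rw [faceEl_Ici_mul_faceEl_Ici, mul_assoc, mul_assoc]
      exact (ih hl hnd hup' (ih hl hnd hup' hform (hup' u hu _ le_sup_left) hcomm) hu hg).cons
        hwl (hγ w)

def upperFaceElements (Gf : ℕ → Subgroup G) (n : ℕ) : Set ((Fin n → Bool) → G) :=
  {c | ∃ v : Fin n → Bool, ∃ g ∈ Gf (weight v), c = faceEl (Set.Ici v) g}

lemma cubeFace_eq_sdiff {I : Finset (Fin n)} {x : Fin n → Bool} {i : Fin n} (hi : i ∈ I)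
    (hxi : x i = false) :
    cubeFace I x = cubeFace (I.erase i) x \ cubeFace I (Function.update x i true) := by
  ext v
  simp only [cubeFace, Set.mem_sdiff, Set.mem_ofPred_eq, mem_erase, Function.update_apply]
  constructor
  · intro h
    exact ⟨fun j hj => h j hj.2, fun h' => by simpa [hxi, h i hi] using h' i hi⟩
  · rintro ⟨h, h'⟩ j hj
    by_cases hji : j = i
    · subst hji
      by_contra hne
      exact h' fun k hk => by
        by_cases hki : k = j
        · subst hki; simpa [hxi] using hne
        · simpa [hki] using h k ⟨hki, hk⟩
    · exact h j ⟨hji, hj⟩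

lemma cubeFace_update_subset (I : Finset (Fin n)) (x : Fin n → Bool) (i : Fin n) (b : Bool) :
    cubeFace I (Function.update x i b) ⊆ cubeFace (I.erase i) x := fun v hv j hj => by
  simpa [Function.update_of_ne (ne_of_mem_erase hj)] using hv j (mem_of_mem_erase hj)

/-- Induction on the number of coordinates fixed to `0`: such a face is the difference of the
face forgetting that coordinate and the face fixing it to `1`. -/
lemma faceEl_cubeFace_mem_closure (hGf : IsGroupFiltration Gf) (I : Finset (Fin n))
    (x : Fin n → Bool) {g : G} (hg : g ∈ Gf I.card) :
    faceEl (cubeFace I x) g ∈ Subgroup.closure (upperFaceElements Gf n) := by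
  induction h : #(I.filter (x · = false)) generalizing I x g with
  | zero =>
    have hx : ∀ i ∈ I, x i = true := fun i hi => by
      simpa using filter_eq_empty_iff.1 (card_eq_zero.1 h) hi
    rw [cubeFace_eq_Ici hx]
    exact Subgroup.subset_closure ⟨_, g, by rwa [weight_indicator], rfl⟩
  | succ m ih =>
    obtain ⟨i, hi⟩ := card_pos.1 (by omega : 0 < #(I.filter (x · = false)))
    rw [mem_filter] at hi
    rw [cubeFace_eq_sdiff hi.1 hi.2, faceEl_diff (cubeFace_update_subset I x i true)]
    refine mul_mem (ih _ x (hGf.antitone card_erase_le hg) ?_) (ih I _ (inv_mem hg) ?_)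
    · rw [filter_erase, card_erase_of_mem (mem_filter.2 hi), h, Nat.add_sub_cancel]
    · have : I.filter (Function.update x i true · = false) = (I.filter (x · = false)).erase i := by
        ext j; by_cases hji : j = i <;> simp [hji]
      rw [this, card_erase_of_mem (mem_filter.2 hi), h, Nat.add_sub_cancel]

lemma hkCubes_le_closure_upperFaceElements (hGf : IsGroupFiltration Gf) (n : ℕ) :
    hkCubes Gf n ≤ Subgroup.closure (upperFaceElements Gf n) :=
  (Subgroup.closure_le _).2 fun _ ⟨_, _, _, ⟨I, x, hI, hF⟩, hg, hc⟩ => by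
    subst hI hF hc
    exact faceEl_cubeFace_mem_closure hGf I x hg

lemma exists_list_pairwise_not_lt (n : ℕ) :
    ∃ l : List (Fin n → Bool), l.Pairwise (fun a b => ¬ b < a) ∧ l.Nodup ∧ ∀ v, v ∈ l := by
  let l := (univ : Finset (Fin n → Bool)).toList.mergeSort fun a b => weight a ≤ weight b
  refine ⟨l, ?_, (List.mergeSort_perm _ _).nodup_iff.2 (nodup_toList _),
    fun v => (List.mergeSort_perm _ _).mem_iff.2 (mem_toList.2 (mem_univ v))⟩
  exact (List.pairwise_mergeSort (le := fun a b => decide (weight a ≤ weight b))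
    (fun _ _ _ hab hbc => by simp only [decide_eq_true_eq] at *; omega)
    (fun _ _ => by simpa using Nat.le_total _ _) _).imp
    fun {a b} hab (hba : b < a) =>
      lt_irrefl _ ((weight_lt_weight hba).trans_le (by simpa using hab))

lemma exists_hasUpperFaceForm (hGf : IsGroupFiltration Gf) {c : (Fin n → Bool) → G}
    (hc : c ∈ hkCubes Gf n) :
    ∃ l : List (Fin n → Bool), l.Pairwise (fun a b => ¬ b < a) ∧ l.Nodup ∧ (∀ v, v ∈ l) ∧
      HasUpperFaceForm Gf l c := by
  obtain ⟨l, hl, hnd, hall⟩ := exists_list_pairwise_not_lt n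
  refine ⟨l, hl, hnd, hall, ?_⟩
  replace hc := hkCubes_le_closure_upperFaceElements hGf n hc
  induction hc using Subgroup.closure_induction_left with
  | one => exact hasUpperFaceForm_one l
  | mul_left _ hx _ _ h =>
    obtain ⟨v, g, hg, rfl⟩ := hx
    exact h.faceEl_Ici_mul hGf hl hnd (fun _ _ w _ => hall w) (hall v) hg
  | inv_mul_cancel _ hx _ _ h =>
    obtain ⟨v, g, hg, rfl⟩ := hx
    rw [faceEl_inv]
    exact h.faceEl_Ici_mul hGf hl hnd (fun _ _ w _ => hall w) (hall v) (inv_mem hg)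

lemma exists_mem_mul_of_forall_lt_mem (hGf : IsGroupFiltration Gf) (Γ : Subgroup G)
    {c : (Fin n → Bool) → G} (hc : c ∈ hkCubes Gf n) {v : Fin n → Bool}
    (hΓ : ∀ w < v, c w ∈ Γ) : ∃ γ ∈ Γ, ∃ g ∈ Gf (weight v), c v = γ * g := by
  obtain ⟨l, hl, hnd, hall, γ, hγ, rfl⟩ := exists_hasUpperFaceForm hGf hc
  have heval : ∀ u, upperFaceProd l γ u = ((l.filter (· < u)).map γ).prod * γ u := fun u => by
    rw [upperFaceProd_apply, List.filter_le_eq_filter_lt_append hl hnd (hall u)]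
    simp
  have hprefix : ∀ u, (∀ w < u, γ w ∈ Γ) → ((l.filter (· < u)).map γ).prod ∈ Γ :=
    fun u hu => Γ.list_prod_mem fun x hx => by
      obtain ⟨w, hw, rfl⟩ := List.mem_map.1 hx
      exact hu w (by simpa using (List.mem_filter.1 hw).2)
  have hγΓ : ∀ w < v, γ w ∈ Γ := by
    intro w
    induction w using WellFoundedLT.induction with
    | _ w ih =>
      intro hwv
      have hw := hprefix w fun u hu => ih u hu (hu.trans hwv)
      simpa [heval] using mul_mem (inv_mem hw) (hΓ w hwv)
  exact ⟨_, hprefix v hγΓ, γ v, hγ v, heval v⟩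

end UpperFaceForm

section CosetCubes

variable {G : Type*} [Group G] {Gf : ℕ → Subgroup G} {Γ : Subgroup G}

def cosetCubes (Gf : ℕ → Subgroup G) (Γ : Subgroup G) (n : ℕ) (f : (Fin n → Bool) → G ⧸ Γ) :
    Prop :=
  ∃ q ∈ hkCubes Gf n, f = (QuotientGroup.mk (s := Γ)) ∘ q

lemma mem_hkCubes_one (hGf : IsGroupFiltration Gf) (h1 : Gf 1 = ⊤) (c : (Fin 1 → Bool) → G) :
    c ∈ hkCubes Gf 1 := by
  have hc : c = faceEl (Set.Ici ⊥) (c ⊥) * faceEl (Set.Ici ⊤) ((c ⊥)⁻¹ * c ⊤) := by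
    ext v
    obtain rfl | rfl : v = ⊥ ∨ v = ⊤ := by
      cases hv : v 0
      · exact .inl (funext fun i => by rwa [Subsingleton.elim i 0])
      · exact .inr (funext fun i => by rwa [Subsingleton.elim i 0])
    · simp [faceEl]
    · simp [faceEl]
  rw [hc]
  refine mul_mem (faceEl_Ici_mem_hkCubes ?_) (faceEl_Ici_mem_hkCubes ?_)
  · exact hGf.antitone (Nat.zero_le 1) (h1 ▸ Subgroup.mem_top _)
  · simp [weight_top, h1]

/-- Compare `c` with the cube of the corner on a lower face containing `v`. -/
lemma exists_mem_mk_mul_eq (hGf : IsGroupFiltration Gf) (h1 : Gf 1 = ⊤) {n : ℕ}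
    {q' : (Fin (n + 1) → Bool) → G ⧸ Γ} (hq' : IsNSCorner (cosetCubes Gf Γ) n q')
    {c : (Fin (n + 1) → Bool) → G} (hc : c ∈ hkCubes Gf (n + 1)) {v : Fin (n + 1) → Bool}
    (hv : v ≠ ⊤) (hagree : ∀ w < v, (c w : G ⧸ Γ) = q' w) :
    ∃ δ ∈ Gf (weight v), ((c v * δ : G) : G ⧸ Γ) = q' v := by
  obtain ⟨j, hj⟩ : ∃ j, v j = false := by
    by_contra! h
    exact hv (funext fun i => by simpa using h i)
  obtain ⟨p, hp, hpq⟩ := hq' j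
  have hq'p : ∀ w, w ≤ v → q' w = ((p (Fin.removeNth j w) : G) : G ⧸ Γ) := fun w hw => by
    have hwj : w j = false := by simpa [hj, Bool.le_iff_imp] using hw j
    have := congrFun hpq (Fin.removeNth j w)
    rwa [lowerFaceRestr, ← hwj, Fin.insertNth_removeNth, Function.update_eq_self] at this
  let d := c⁻¹ * p ∘ Fin.removeNth j
  have hd : d ∈ hkCubes Gf (n + 1) :=
    mul_mem (inv_mem hc) ((isCubeMorphism_removeNth j).comp_mem_hkCubes hGf hp)
  obtain ⟨γ, hγ, g, hg, hdv⟩ := exists_mem_mul_of_forall_lt_mem hGf Γ hd (v := v) fun w hw => by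
    show (c w)⁻¹ * p (Fin.removeNth j w) ∈ Γ
    rw [← QuotientGroup.eq, hagree w hw, hq'p w hw.le]
  refine ⟨γ * g * γ⁻¹, (hGf.normal h1 _).conj_mem g hg γ, ?_⟩
  have hcv : c v * (γ * g * γ⁻¹) = p (Fin.removeNth j v) * γ⁻¹ := by
    have : c v * d v = p (Fin.removeNth j v) := by simp [d]
    rw [← this, hdv]
    group
  rw [hcv, hq'p v le_rfl, QuotientGroup.eq]
  simpa using hγ

/-- Vertices are added in order of weight; the correction `δ^{[v, ⊤]}` at a new vertex `v` of
maximal weight changes no other vertex of `S`. -/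
lemma exists_mem_hkCubes_forall_mem_mk_eq (hGf : IsGroupFiltration Gf) (h1 : Gf 1 = ⊤) {n : ℕ}
    {q' : (Fin (n + 1) → Bool) → G ⧸ Γ} (hq' : IsNSCorner (cosetCubes Gf Γ) n q')
    (S : Finset (Fin (n + 1) → Bool)) (hS : ∀ v ∈ S, ∀ w ≤ v, w ∈ S) (htop : ⊤ ∉ S) :
    ∃ c ∈ hkCubes Gf (n + 1), ∀ w ∈ S, (c w : G ⧸ Γ) = q' w := by
  induction S using Finset.strongInduction with
  | H S ih =>
  rcases S.eq_empty_or_nonempty with rfl | hne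
  · exact ⟨1, one_mem _, by simp⟩
  obtain ⟨v, hvS, hvmax⟩ := S.exists_max_image weight hne
  have hmax : ∀ w ∈ S, ¬ v < w := fun w hw hvw => (weight_lt_weight hvw).not_ge (hvmax w hw)
  have hS' : ∀ u ∈ S.erase v, ∀ w ≤ u, w ∈ S.erase v := fun u hu w hwu => by
    refine mem_erase.2 ⟨?_, hS u (mem_of_mem_erase hu) w hwu⟩
    rintro rfl
    exact hmax u (mem_of_mem_erase hu) (lt_of_le_of_ne hwu (ne_of_mem_erase hu).symm)
  obtain ⟨c, hc, hagree⟩ := ih _ (erase_ssubset hvS) hS' fun h => htop (mem_of_mem_erase h)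
  obtain ⟨δ, hδ, hcv⟩ := exists_mem_mk_mul_eq hGf h1 hq' hc (ne_of_mem_of_not_mem hvS htop)
    fun w hw => hagree w (mem_erase.2 ⟨hw.ne, hS v hvS w hw.le⟩)
  refine ⟨c * faceEl (Set.Ici v) δ, mul_mem hc (faceEl_Ici_mem_hkCubes hδ), fun w hw => ?_⟩
  rcases eq_or_ne w v with rfl | hwv
  · simpa [faceEl] using hcv
  · have hvw : ¬ v ≤ w := fun h => hmax w hw (lt_of_le_of_ne h hwv.symm)
    simpa [faceEl, hvw] using hagree w (mem_erase.2 ⟨hwv, hw⟩)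

lemma exists_completion (hGf : IsGroupFiltration Gf) (h1 : Gf 1 = ⊤) {n : ℕ}
    {q' : (Fin (n + 1) → Bool) → G ⧸ Γ} (hq' : IsNSCorner (cosetCubes Gf Γ) n q') :
    ∃ c ∈ hkCubes Gf (n + 1), ∀ v ≠ ⊤, (c v : G ⧸ Γ) = q' v := by
  obtain ⟨c, hc, hcq⟩ := exists_mem_hkCubes_forall_mem_mk_eq hGf h1 hq' (univ.erase ⊤)
    (fun v hv w hwv => mem_erase.2 ⟨fun h => (ne_of_mem_erase hv) (top_le_iff.1 (h ▸ hwv)),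
      mem_univ w⟩) (notMem_erase _ _)
  exact ⟨c, hc, fun v hv => hcq v (mem_erase.2 ⟨hv, mem_univ v⟩)⟩

lemma mk_apply_top_eq (hGf : IsGroupFiltration Gf) {n : ℕ} (hn : Gf n = ⊥)
    {c c' : (Fin n → Bool) → G} (hc : c ∈ hkCubes Gf n) (hc' : c' ∈ hkCubes Gf n)
    (h : ∀ v ≠ ⊤, (c v : G ⧸ Γ) = c' v) : (c ⊤ : G ⧸ Γ) = c' ⊤ := by
  obtain ⟨γ, hγ, g, hg, hcc'⟩ := exists_mem_mul_of_forall_lt_mem hGf Γ (mul_mem (inv_mem hc) hc')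
    (v := ⊤) fun w hw => QuotientGroup.eq.1 (h w hw.ne)
  rw [weight_top, hn, Subgroup.mem_bot] at hg
  rw [QuotientGroup.eq, ← Pi.inv_apply, ← Pi.mul_apply, hcc', hg, mul_one]
  exact hγ

lemma isNilspace_cosetCubes (hGf : IsGroupFiltration Gf) (h1 : Gf 1 = ⊤) :
    IsNilspace (cosetCubes Gf Γ) := by
  refine ⟨fun m n φ hφ _ ⟨q, hq, hf⟩ => ⟨q ∘ φ, hφ.comp_mem_hkCubes hGf hq, hf ▸ rfl⟩,
    fun q => ⟨fun v => (q v).out, mem_hkCubes_one hGf h1 _, by ext; simp⟩, fun n q' hq' => ?_⟩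
  obtain ⟨c, hc, hcq⟩ := exists_completion hGf h1 hq'
  exact ⟨_, ⟨c, hc, rfl⟩, hcq⟩

end CosetCubes

theorem stmt13_general {G : Type*} [Group G] (Gf : ℕ → Subgroup G) (hGf : IsGroupFiltration Gf)
    (h1 : Gf 1 = ⊤) {k : ℕ} (hk : Gf (k + 1) = ⊥) (Γ : Subgroup G) :
    IsKStepNilspace
      (fun n (f : (Fin n → Bool) → G ⧸ Γ) =>
        ∃ q ∈ hkCubes Gf n, f = (QuotientGroup.mk (s := Γ)) ∘ q) k := by
  refine ⟨isNilspace_cosetCubes hGf h1, fun q' hq' => ?_⟩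
  obtain ⟨c, hc, hcq⟩ := exists_completion hGf h1 hq'
  refine ⟨_, ⟨⟨c, hc, rfl⟩, hcq⟩, ?_⟩
  rintro _ ⟨⟨c', hc', rfl⟩, hc'q⟩
  ext v
  by_cases hv : v = ⊤
  · subst hv
    exact mk_apply_top_eq hGf hk hc' hc fun v hv => (hc'q v hv).trans (hcq v hv).symm
  · exact (hc'q v hv).trans (hcq v hv).symm

theorem stmt13 {G : Type*} [Group G] (Gf : ℕ → Subgroup G) (hGf : IsGroupFiltration Gf)
    (h0 : Gf 0 = ⊤) (h1 : Gf 1 = ⊤) {k : ℕ} (hk : Gf (k + 1) = ⊥)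
    (hmin : ∀ j : ℕ, Gf (j + 1) = ⊥ → k ≤ j) (Γ : Subgroup G) :
    IsKStepNilspace
      (fun n (f : (Fin n → Bool) → G ⧸ Γ) =>
        ∃ q ∈ hkCubes Gf n, f = (QuotientGroup.mk (s := Γ)) ∘ q) k :=
  stmt13_general Gf hGf h1 hk Γ
end

section
/- Let X be a 1-step nilspace and fix e ∈ X. Define an operation + on X by: x + y is the unique z ∈ X such that the map q: {0,1}^2 → X with q(00) = e, q(10) = x, q(01) = y, q(11) = z is in C^2(X). Then (X, +) is an abelian group with identity e. -/
open Finset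

/-!
Each group law is read off a cube produced by the nilspace axioms. Commutativity comes from
swapping the two coordinates of a 2-cube, the identity from the 2-cube `(e, x, e, x)` pulled
back from a 1-cube, and an inverse of `x` from completing the 2-corner based at `x` with
neighbours `e, e` and reflecting in the first coordinate. For associativity, complete the
3-corner whose lower faces are the squares of `x + y`, `x + z` and `y + z`; its two diagonal
2-faces `(u₀, u₀, u₁)` and `(u₀, u₁, u₁)` are the squares of `(x + y) + z` and `x + (y + z)`,
which share the top vertex.
-/

section

variable {X : Type*} {C : ∀ n, ((Fin n → Bool) → X) → Prop}

theorem isCubeMorphism_precomp {m n : ℕ} (σ : Fin n → Fin m) :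
    IsCubeMorphism (fun v : Fin m → Bool => v ∘ σ) :=
  ⟨(LinearMap.funLeft ℤ ℤ σ).toAddMonoidHom, 0, fun v => by ext; simp [cubeEmb]⟩

theorem isCubeMorphism_flip {n : ℕ} (i : Fin n) :
    IsCubeMorphism (fun v : Fin n → Bool => Function.update v i (!v i)) := by
  classical
  refine ⟨AddMonoidHom.mk' (fun f j => if j = i then -f j else f j) ?_, Pi.single i 1, ?_⟩
  · intro f g; ext j; split_ifs <;> simp [*, add_comm]
  · intro v; ext j
    by_cases hj : j = i
    · subst hj; cases h : v j <;> simp [cubeEmb, h]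
    · simp [cubeEmb, hj]

theorem exists_eq_false_of_ne_top {n : ℕ} {v : Fin n → Bool} (hv : v ≠ fun _ => true) :
    ∃ i, v i = false := by
  simpa [funext_iff] using hv

theorem IsNSCompletion.eq_of_agree {n : ℕ} {q' q f : (Fin (n + 1) → Bool) → X}
    (h : IsNSCompletion C n q' q) (hf : ∀ v, v ≠ (fun _ => true) → q' v = f v)
    (htop : q (fun _ => true) = f (fun _ => true)) : q = f :=
  funext fun v => if hv : v = fun _ => true then hv ▸ htop else (h.2 v hv).trans (hf v hv)

theorem IsNilspace.comp {m n : ℕ} (hC : IsNilspace C) {φ : (Fin m → Bool) → (Fin n → Bool)}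
    (hφ : IsCubeMorphism φ) {q : (Fin n → Bool) → X} (hq : C n q) : C m (q ∘ φ) :=
  hC.1 m n φ hφ q hq

namespace Nilspace

/-- The map `{0,1}^2 → X` sending `00, 10, 01, 11` to `e, x, y, z`. -/
def square (e x y z : X) : (Fin 2 → Bool) → X :=
  fun v => if v 0 then (if v 1 then z else x) else (if v 1 then y else e)

/-- The map `{0,1}^3 → X` sending `000, 100, 010, 001, 110, 101, 011, 111`
to `e, x, y, z, a, b, c, t`. -/
def cube3 (e x y z a b c t : X) : (Fin 3 → Bool) → X := fun v =>
  if v 0 then (if v 1 then (if v 2 then t else a) else (if v 2 then b else x))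
  else (if v 1 then (if v 2 then c else y) else (if v 2 then z else e))

theorem square_apply_of_ne_top {e x y z z' : X} {v : Fin 2 → Bool}
    (hv : v ≠ fun _ => true) : square e x y z v = square e x y z' v := by
  obtain ⟨i, hi⟩ := exists_eq_false_of_ne_top hv
  fin_cases i <;> simp only [Fin.zero_eta, Fin.mk_one] at hi <;> simp [square, hi]

theorem cube3_apply_of_ne_top {e x y z a b c t t' : X} {v : Fin 3 → Bool}
    (hv : v ≠ fun _ => true) : cube3 e x y z a b c t v = cube3 e x y z a b c t' v := by
  obtain ⟨i, hi⟩ := exists_eq_false_of_ne_top hv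
  fin_cases i <;> simp only [Fin.zero_eta, Fin.mk_one, Fin.reduceFinMk] at hi <;> simp [cube3, hi]

end Nilspace

open Nilspace

variable (hC : IsNilspace C)
include hC

theorem IsNilspace.square_swap {e x y z : X} (h : C 2 (square e x y z)) :
    C 2 (square e y x z) := by
  convert hC.comp (isCubeMorphism_precomp ![(1 : Fin 2), 0]) h using 1
  funext v
  cases h0 : v 0 <;> cases h1 : v 1 <;> simp [square, h0, h1]

theorem IsNilspace.square_degenerate (e x : X) : C 2 (square e x e x) := by
  convert hC.comp (isCubeMorphism_precomp ![(0 : Fin 2)])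
    (hC.2.1 fun u => if u 0 then x else e) using 1
  funext v
  cases h0 : v 0 <;> cases h1 : v 1 <;> simp [square, h0, h1]

theorem IsNilspace.exists_inverse_square (e x : X) : ∃ y, C 2 (square e x y e) := by
  obtain ⟨q, hq⟩ := hC.2.2 1 (square x e e e) fun _ => hC.2.1 _
  refine ⟨q fun _ => true, ?_⟩
  have hsq := hq.1
  rw [hq.eq_of_agree (f := square x e e (q fun _ => true))
    (fun _ hv => square_apply_of_ne_top hv) rfl] at hsq
  convert hC.comp (isCubeMorphism_flip 0) hsq using 1
  funext v
  cases h0 : v 0 <;> cases h1 : v 1 <;> simp [square, h0, h1]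

theorem IsNilspace.exists_assoc_squares {e x y z a b c : X} (hxy : C 2 (square e x y a))
    (hxz : C 2 (square e x z b)) (hyz : C 2 (square e y z c)) :
    ∃ t, C 2 (square e a z t) ∧ C 2 (square e x c t) := by
  have hcorner : IsNSCorner C 2 (cube3 e x y z a b c e) := by
    intro j
    fin_cases j
    exacts [hyz, hxz, hxy]
  obtain ⟨Q, hQ⟩ := hC.2.2 2 _ hcorner
  have hcube := hQ.1
  rw [hQ.eq_of_agree (f := cube3 e x y z a b c (Q fun _ => true))
    (fun _ hv => cube3_apply_of_ne_top hv) rfl] at hcube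
  refine ⟨Q fun _ => true, ?_, ?_⟩
  · convert hC.comp (isCubeMorphism_precomp ![(0 : Fin 2), 0, 1]) hcube using 1
    funext v
    cases h0 : v 0 <;> cases h1 : v 1 <;> simp [cube3, square, h0, h1]
  · convert hC.comp (isCubeMorphism_precomp ![(0 : Fin 2), 1, 1]) hcube using 1
    funext v
    cases h0 : v 0 <;> cases h1 : v 1 <;> simp [cube3, square, h0, h1]

end

theorem stmt14 {X : Type*} (C : ∀ n, ((Fin n → Bool) → X) → Prop)
    (hns : IsKStepNilspace C 1) (e : X) (add : X → X → X)
    (hadd : ∀ x y z : X, add x y = z ↔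
      C 2 (fun v : Fin 2 → Bool =>
        if v 0 then (if v 1 then z else x) else (if v 1 then y else e))) :
    (∀ x y : X, add x y = add y x) ∧
    (∀ x y z : X, add (add x y) z = add x (add y z)) ∧
    (∀ x : X, add x e = x) ∧
    (∀ x : X, ∃ y : X, add x y = e) := by
  have hC := hns.1
  have hsq : ∀ x y z, add x y = z ↔ C 2 (Nilspace.square e x y z) := hadd
  have hadd_sq : ∀ x y, C 2 (Nilspace.square e x y (add x y)) := fun x y => (hsq x y _).1 rfl
  refine ⟨fun x y => ?_, fun x y z => ?_, fun x => ?_, fun x => ?_⟩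
  · exact ((hsq y x _).2 (hC.square_swap (hadd_sq x y))).symm
  · obtain ⟨t, hleft, hright⟩ :=
      hC.exists_assoc_squares (hadd_sq x y) (hadd_sq x z) (hadd_sq y z)
    rw [(hsq _ _ t).2 hleft, (hsq _ _ t).2 hright]
  · exact (hsq x e x).2 (hC.square_degenerate e x)
  · obtain ⟨y, hy⟩ := hC.exists_inverse_square e x
    exact ⟨y, (hsq x y e).2 hy⟩
end

section
/- Let X be a nilspace and k ≥ 1. Two elements x, y ∈ X satisfy x ∼_k y (i.e. there exist q_0, q_1 ∈ C^{k+1}(X) with q_0(0^{k+1}) = x, q_1(0^{k+1}) = y, and q_0(v) = q_1(v) for all v ≠ 0^{k+1}) if and only if the map q: {0,1}^{k+1} → X sending 0^{k+1} to y and every other vertex to x is a cube in C^{k+1}(X). Moreover, ∼_k is an equivalence relation on X. -/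
open Finset

/-- The relation `x ∼_k y` on a nilspace. -/
def simRel {X : Type*} (C : ∀ n, ((Fin n → Bool) → X) → Prop) (k : ℕ)
    (x y : X) : Prop :=
  ∃ q0 q1 : (Fin (k + 1) → Bool) → X, C (k + 1) q0 ∧ C (k + 1) q1 ∧
    q0 (fun _ => false) = x ∧ q1 (fun _ => false) = y ∧
    ∀ v : Fin (k + 1) → Bool, v ≠ (fun _ => false) → q0 v = q1 v

/-!
Induct on the dimension `n = k + 1`, for cube structures that are only
closed under cube morphisms and admit corner completion: ergodicity is not available inside
the induction, because it passes through the arrow space `X × X`, whose `n`-cubes are the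
`(n + 1)`-cubes `⟨a, b⟩` of `X`.

Given cubes `c₀, c₁` agreeing off `0` with `c₀ 0 = x`, `c₁ 0 = y`, the arrows
`⟨c₀|{u₀ = 1}, c₀|{u₀ = 0}⟩` and `⟨c₀|{u₀ = 1}, c₁|{u₀ = 0}⟩` agree off `0` in the arrow space,
so by induction `⟨w, pat x y n⟩` is a cube, with `w = c₀ e₀`. Successive corner completions
then build an `(n + 2)`-cube (`spread`) that is constantly `w` on `{u₀ = u₁ = 0}` and equals the
pattern on the antidiagonal `{u₀ ≠ u₁}`; restricting it to the antidiagonal gives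
`pat x y (n + 1)`. Transitivity of `∼_k` follows, since two patterns with the same value `y`
at `0` agree off `0`.
-/

section CubeMorphism

variable {m n : ℕ}

def litEval : Option (Fin m) × Bool → (Fin m → Bool) → Bool
  | (none, b), _ => b
  | (some j, b), v => xor (v j) b

theorem isCubeMorphism_of_literals (d : Fin n → Option (Fin m) × Bool)
    {φ : (Fin m → Bool) → Fin n → Bool} (hφ : ∀ v i, φ v i = litEval (d i) v) :
    IsCubeMorphism φ := by
  let L : Option (Fin m) × Bool → (Fin m → ℤ) →+ ℤ := fun
    | (none, _) => 0
    | (some j, b) => (if b then -1 else 1 : ℤ) • Pi.evalAddMonoidHom (fun _ => ℤ) j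
  refine ⟨AddMonoidHom.pi fun i => L (d i), fun i => if (d i).2 then 1 else 0,
    fun v => funext fun i => ?_⟩
  rw [cubeEmb, hφ]
  rcases hd : d i with ⟨_ | j, _ | _⟩ <;> simp [L, litEval, cubeEmb, hd]
  cases v j <;> rfl

theorem IsCubeMorphism.consLift {φ : (Fin m → Bool) → Fin n → Bool} (hφ : IsCubeMorphism φ) :
    IsCubeMorphism fun u : Fin (m + 1) → Bool =>
      (Fin.cons (u 0) (φ (Fin.tail u)) : Fin (n + 1) → Bool) := by
  obtain ⟨M, t, hMt⟩ := hφ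
  refine ⟨AddMonoidHom.mk' (fun f => Fin.cons (f 0) (M (Fin.tail f))) fun f g => ?_,
    Fin.cons 0 t, fun v => ?_⟩
  · have : Fin.tail (f + g) = Fin.tail f + Fin.tail g := rfl
    ext i
    cases i using Fin.cases <;> simp [this]
  · ext i
    cases i using Fin.cases with
    | zero => simp [cubeEmb]
    | succ i =>
      have : Fin.tail (cubeEmb v) = cubeEmb (Fin.tail v) := rfl
      simpa [cubeEmb, this] using congrFun (hMt (Fin.tail v)) i

end CubeMorphism

namespace Nilspace

variable {X : Type*} {C : ∀ n, ((Fin n → Bool) → X) → Prop} {m n : ℕ}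

theorem cons_eq_const_iff {α : Type*} {a b : α} {v : Fin n → α} :
    (Fin.cons a v : Fin (n + 1) → α) = (fun _ => b) ↔ a = b ∧ v = fun _ => b := by
  rw [← Fin.cons_self_tail (fun _ => b), Fin.cons_inj]
  rfl

@[simp]
theorem cons_const {α : Type*} (a : α) :
    (Fin.cons a fun _ => a : Fin (n + 1) → α) = fun _ => a :=
  cons_eq_const_iff.mpr ⟨rfl, rfl⟩

theorem insertNth_false_ne_true (j : Fin (n + 1)) (v : Fin n → Bool) :
    j.insertNth false v ≠ fun _ => true :=
  fun h => by simpa using congrFun h j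

theorem weight_eq_sum (v : Fin n → Bool) : weight v = ∑ i, if v i then 1 else 0 := by
  rw [weight, Finset.card_filter]

@[simp]
theorem weight_cons (t : Bool) (v : Fin n → Bool) :
    weight (Fin.cons t v : Fin (n + 1) → Bool) = (if t then 1 else 0) + weight v := by
  rw [weight_eq_sum, weight_eq_sum, Fin.sum_univ_succ]
  simp

@[simp]
theorem weight_insertNth_false (j : Fin (n + 1)) (v : Fin n → Bool) :
    weight (j.insertNth false v) = weight v := by
  simp [weight_eq_sum, Fin.sum_univ_succAbove _ j]

theorem weight_eq_iff {v : Fin n → Bool} : weight v = n ↔ v = fun _ => true := by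
  have := Finset.card_filter_eq_iff (s := Finset.univ) (p := fun i => v i = true)
  rw [Finset.card_fin] at this
  rw [weight, this, funext_iff]
  simp

def IsMorphismClosed (C : ∀ n, ((Fin n → Bool) → X) → Prop) : Prop :=
  ∀ (m n : ℕ) (φ : (Fin m → Bool) → (Fin n → Bool)), IsCubeMorphism φ →
    ∀ q, C n q → C m (q ∘ φ)

def HasCornerCompletion (C : ∀ n, ((Fin n → Bool) → X) → Prop) : Prop :=
  ∀ n (q' : (Fin (n + 1) → Bool) → X), IsNSCorner C n q' → ∃ q, IsNSCompletion C n q' q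

theorem IsMorphismClosed.isCube_comp_of_literals (hC : IsMorphismClosed C)
    {q : (Fin n → Bool) → X} (hq : C n q) (d : Fin n → Option (Fin m) × Bool)
    {φ : (Fin m → Bool) → Fin n → Bool} (hφ : ∀ v i, φ v i = litEval (d i) v) :
    C m (q ∘ φ) :=
  hC m n φ (isCubeMorphism_of_literals d hφ) q hq

theorem IsMorphismClosed.isCube_lowerFaceRestr (hC : IsMorphismClosed C)
    {q : (Fin (n + 1) → Bool) → X} (hq : C (n + 1) q) (j : Fin (n + 1)) :
    C n (lowerFaceRestr q j) :=
  hC.isCube_comp_of_literals hq (j.insertNth (none, false) fun i => (some i, false))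
    fun v i => by cases i using j.succAboveCases <;> simp [litEval]

def arrow (a b : (Fin n → Bool) → X) : (Fin (n + 1) → Bool) → X :=
  fun u => if u 0 then b (Fin.tail u) else a (Fin.tail u)

@[simp]
theorem arrow_cons (a b : (Fin n → Bool) → X) (t : Bool) (v : Fin n → Bool) :
    arrow a b (Fin.cons t v) = if t then b v else a v := by
  simp [arrow]

theorem lowerFaceRestr_arrow_zero (a b : (Fin n → Bool) → X) :
    lowerFaceRestr (arrow a b) 0 = a := by
  ext v
  simp [lowerFaceRestr, Fin.insertNth_zero']

theorem lowerFaceRestr_arrow_succ (a b : (Fin (n + 1) → Bool) → X) (j : Fin (n + 1)) :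
    lowerFaceRestr (arrow a b) j.succ = arrow (lowerFaceRestr a j) (lowerFaceRestr b j) := by
  ext u
  induction u using Fin.consCases
  simp [lowerFaceRestr]

theorem arrow_comp_consLift (a b : (Fin n → Bool) → X) (φ : (Fin m → Bool) → Fin n → Bool) :
    arrow a b ∘ (fun u => Fin.cons (u 0) (φ (Fin.tail u))) = arrow (a ∘ φ) (b ∘ φ) := by
  ext u
  simp [arrow]

theorem IsMorphismClosed.isCube_arrow_flip (hC : IsMorphismClosed C)
    {c : (Fin (n + 1) → Bool) → X} (hc : C (n + 1) c) :
    C (n + 1) (arrow (fun v => c (Fin.cons true v)) (fun v => c (Fin.cons false v))) := by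
  have := hC.isCube_comp_of_literals hc (Fin.cons (some 0, true) fun i => (some i.succ, false))
    (φ := fun u => Fin.cons (!u 0) (Fin.tail u)) fun u i => by
      cases i using Fin.cases <;> simp [litEval, Fin.tail]
  convert this using 1
  ext u
  induction u using Fin.consCases with
  | cons t v => cases t <;> simp

def arrowCubes (C : ∀ n, ((Fin n → Bool) → X) → Prop) :
    ∀ n, ((Fin n → Bool) → X × X) → Prop :=
  fun n P => C (n + 1) (arrow (Prod.fst ∘ P) (Prod.snd ∘ P))

theorem IsMorphismClosed.arrowCubes (hC : IsMorphismClosed C) :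
    IsMorphismClosed (arrowCubes C) := by
  intro m n φ hφ P hP
  have := hC _ _ _ (IsCubeMorphism.consLift hφ) _ hP
  rwa [arrow_comp_consLift] at this

theorem HasCornerCompletion.arrowCubes (hC : IsMorphismClosed C) (hK : HasCornerCompletion C) :
    HasCornerCompletion (arrowCubes C) := by
  intro n Q' hQ'
  obtain ⟨A, hA, hAQ'⟩ := hK n (Prod.fst ∘ Q') fun j => by
    have := hC.isCube_lowerFaceRestr (hQ' j) 0
    rwa [lowerFaceRestr_arrow_zero] at this
  have hAface (j : Fin (n + 1)) : lowerFaceRestr A j = lowerFaceRestr (Prod.fst ∘ Q') j :=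
    funext fun v => hAQ' _ (insertNth_false_ne_true j v)
  obtain ⟨N, hN, hNA⟩ := hK (n + 1) (arrow A (Prod.snd ∘ Q')) fun j => by
    cases j using Fin.cases with
    | zero => rwa [lowerFaceRestr_arrow_zero]
    | succ j => rw [lowerFaceRestr_arrow_succ, hAface j]; exact hQ' j
  refine ⟨fun v => (A v, N (Fin.cons true v)), ?_, fun v hv => ?_⟩
  · show C (n + 2) _
    convert hN using 1
    ext u
    induction u using Fin.consCases with
    | cons t v =>
      cases t
      · simpa using (hNA (Fin.cons false v) (by simp [cons_eq_const_iff])).symm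
      · simp
  · refine Prod.ext (hAQ' v hv) ?_
    simpa using hNA (Fin.cons true v) (by simpa [cons_eq_const_iff] using hv)

def pat (x y : X) (n : ℕ) : (Fin n → Bool) → X := fun v => if v = fun _ => false then y else x

theorem comp_pat {Y : Type*} (f : X → Y) (x y : X) (n : ℕ) :
    f ∘ pat x y n = pat (f x) (f y) n := by
  ext v
  simp only [Function.comp, pat, apply_ite f]

theorem pat_self (x : X) (n : ℕ) : pat x x n = fun _ => x := by
  ext v
  simp [pat]

@[simp]
theorem pat_cons (x y : X) (t : Bool) (v : Fin n → Bool) :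
    pat x y (n + 1) (Fin.cons t v) = if t then x else pat x y n v := by
  cases t <;> simp [pat, cons_eq_const_iff]

@[simp]
theorem pat_insertNth_false (x y : X) (j : Fin (n + 1)) (v : Fin n → Bool) :
    pat x y (n + 1) (j.insertNth false v) = pat x y n v := by
  simp only [pat, Fin.insertNth_eq_iff, true_and]
  rfl

theorem lowerFaceRestr_pat (x y : X) (j : Fin (n + 1)) :
    lowerFaceRestr (pat x y (n + 1)) j = pat x y n :=
  funext (pat_insertNth_false x y j)

theorem IsMorphismClosed.isCube_arrow_pat_of_le (hC : IsMorphismClosed C) {x y w : X}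
    (h : C (n + 1) (arrow (fun _ => w) (pat x y n))) {l : ℕ} (hl : l ≤ n) :
    C (l + 1) (arrow (fun _ => w) (pat x y l)) := by
  induction n with
  | zero => rwa [Nat.le_zero.mp hl]
  | succ n ih =>
    rcases hl.eq_or_lt with rfl | hl
    · exact h
    refine ih ?_ (Nat.lt_succ_iff.mp hl)
    have := hC.isCube_lowerFaceRestr h (Fin.succ 0)
    rwa [lowerFaceRestr_arrow_succ, lowerFaceRestr_pat] at this

/-- On `{u₀ = u₁ = 1}` the values are those produced by successive corner completions; they
depend only on the weight of the tail, which makes the faces `{u_{j+2} = 0}` of one stage equal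
to the previous stage. -/
def spread (x y w : X) (g : ℕ → X) (n : ℕ) : (Fin (n + 2) → Bool) → X :=
  fun u => if u 0 = u 1 then (if u 0 then g (weight (Fin.tail u)) else w)
    else pat x y (n + 1) (Fin.tail u)

section Spread

variable {x y w : X} {g : ℕ → X}

@[simp]
theorem spread_cons (t : Bool) (v : Fin (n + 1) → Bool) :
    spread x y w g n (Fin.cons t v) =
      if t = v 0 then (if t then g (weight v) else w) else pat x y (n + 1) v := by
  simp [spread]

theorem lowerFaceRestr_spread_zero :
    lowerFaceRestr (spread x y w g n) 0 = fun v => if v 0 then x else w := by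
  ext v
  induction v using Fin.consCases with
  | cons t v => cases t <;> simp [lowerFaceRestr, Fin.insertNth_zero']

theorem lowerFaceRestr_spread_one :
    lowerFaceRestr (spread x y w g n) (Fin.succ 0) = arrow (fun _ => w) (pat x y n) := by
  ext v
  induction v using Fin.consCases with
  | cons t v =>
    unfold lowerFaceRestr
    rw [Fin.insertNth_succ_cons, Fin.insertNth_zero']
    cases t <;> simp

theorem lowerFaceRestr_spread_succ_succ (j : Fin (n + 1)) :
    lowerFaceRestr (spread x y w g (n + 1)) j.succ.succ = spread x y w g n := by
  ext u
  induction u using Fin.consCases with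
  | cons t v =>
    induction v using Fin.consCases with
    | cons s v => simp [lowerFaceRestr]

theorem spread_comp_antidiag :
    spread x y w g n ∘ (fun v => Fin.cons (!v 0) v) = pat x y (n + 1) := by
  ext v
  simp

theorem IsMorphismClosed.isNSCorner_spread (hC : IsMorphismClosed C)
    (hwx : C 1 fun t => if t 0 then x else w) (hH : C (n + 1) (arrow (fun _ => w) (pat x y n)))
    (hface : ∀ j : Fin n, C (n + 1) (lowerFaceRestr (spread x y w g n) j.succ.succ)) :
    IsNSCorner C (n + 1) (spread x y w g n) := by
  intro j
  cases j using Fin.cases with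
  | zero =>
    rw [lowerFaceRestr_spread_zero]
    exact hC.isCube_comp_of_literals hwx (fun _ => (some 0, false)) (φ := fun v _ => v 0)
      (by simp [litEval])
  | succ j =>
    cases j using Fin.cases with
    | zero => rwa [lowerFaceRestr_spread_one]
    | succ j => exact hface j

theorem HasCornerCompletion.exists_isCube_spread (hK : HasCornerCompletion C)
    (h : IsNSCorner C (n + 1) (spread x y w g n)) : ∃ g', C (n + 2) (spread x y w g' n) := by
  obtain ⟨T, hT, hTs⟩ := hK _ _ h
  refine ⟨Function.update g (n + 1) (T fun _ => true), ?_⟩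
  convert hT using 1
  ext u
  by_cases hu : u = fun _ => true
  · subst hu
    simp only [spread, if_true]
    exact (congrArg _ (weight_eq_iff.mpr rfl)).trans (Function.update_self ..)
  rw [hTs u hu]
  induction u using Fin.consCases with
  | cons t v =>
    simp only [spread_cons]
    split_ifs with ht htrue <;> try rfl
    exact Function.update_of_ne
      (fun hv => hu (cons_eq_const_iff.mpr ⟨htrue, weight_eq_iff.mp hv⟩)) _ _

theorem exists_isCube_spread (hC : IsMorphismClosed C) (hK : HasCornerCompletion C)
    (hwx : C 1 fun t => if t 0 then x else w)
    (hH : ∀ l ≤ n, C (l + 1) (arrow (fun _ => w) (pat x y l))) :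
    ∃ g, C (n + 2) (spread x y w g n) := by
  induction n with
  | zero =>
    exact hK.exists_isCube_spread (g := fun _ => w)
      (hC.isNSCorner_spread hwx (hH 0 le_rfl) fun j => j.elim0)
  | succ n ih =>
    obtain ⟨g, hg⟩ := ih fun l hl => hH l (hl.trans n.le_succ)
    refine hK.exists_isCube_spread (g := g) (hC.isNSCorner_spread hwx (hH _ le_rfl) fun j => ?_)
    rwa [lowerFaceRestr_spread_succ_succ]

theorem isCube_pat_succ_of_arrow (hC : IsMorphismClosed C) (hK : HasCornerCompletion C)
    (hwx : C 1 fun t => if t 0 then x else w) (hH : C (n + 1) (arrow (fun _ => w) (pat x y n))) :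
    C (n + 1) (pat x y (n + 1)) := by
  obtain ⟨g, hg⟩ := exists_isCube_spread hC hK hwx fun l hl => hC.isCube_arrow_pat_of_le hH hl
  rw [← spread_comp_antidiag (w := w) (g := g)]
  exact hC.isCube_comp_of_literals hg (Fin.cons (some 0, true) fun i => (some i, false))
    fun v i => by cases i using Fin.cases <;> simp [litEval]

end Spread

theorem isCube_pat_of_eqOn_ne_zero (hC : IsMorphismClosed C) (hK : HasCornerCompletion C)
    {c₀ c₁ : (Fin n → Bool) → X} (h₀ : C n c₀) (h₁ : C n c₁)
    (h : ∀ v, v ≠ (fun _ => false) → c₀ v = c₁ v) :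
    C n (pat (c₀ fun _ => false) (c₁ fun _ => false) n) := by
  induction n generalizing X with
  | zero =>
    convert h₁ using 1
    ext v
    rw [Subsingleton.elim v fun _ => false]
    simp [pat]
  | succ n ih =>
    have hD₀ : arrowCubes C n fun v => (c₀ (Fin.cons true v), c₀ (Fin.cons false v)) :=
      IsMorphismClosed.isCube_arrow_flip hC h₀
    have hD₁ : arrowCubes C n fun v => (c₀ (Fin.cons true v), c₁ (Fin.cons false v)) := by
      have hc : (fun v => c₀ (Fin.cons true v)) = fun v => c₁ (Fin.cons true v) :=
        funext fun v => h _ (by simp [cons_eq_const_iff])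
      show C (n + 1) (arrow (fun v => c₀ (Fin.cons true v)) fun v => c₁ (Fin.cons false v))
      rw [hc]
      exact IsMorphismClosed.isCube_arrow_flip hC h₁
    have hH := ih (IsMorphismClosed.arrowCubes hC) (HasCornerCompletion.arrowCubes hC hK) hD₀ hD₁
      fun v hv => Prod.ext rfl (h _ (by simpa [cons_eq_const_iff] using hv))
    simp only [arrowCubes, comp_pat, pat_self, cons_const] at hH
    have hwx :
        C 1 fun t => if t 0 then c₀ (fun _ => false) else c₀ (Fin.cons true fun _ => false) := by
      have := IsMorphismClosed.isCube_comp_of_literals hC h₀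
        (Fin.cons (some 0, true) fun _ => (none, false))
        (φ := fun t : Fin 1 → Bool => Fin.cons (!t 0) fun _ => false) fun t i => by
          cases i using Fin.cases <;> simp [litEval]
      convert this using 1
      funext t
      cases ht : t 0 <;> simp [ht]
    exact isCube_pat_succ_of_arrow hC hK hwx hH

theorem isCube_const (hns : IsNilspace C) (x : X) (n : ℕ) : C n fun _ => x :=
  IsMorphismClosed.isCube_comp_of_literals hns.1 (hns.2.1 fun _ => x) (fun _ => (none, false))
    (φ := fun _ _ => false) (by simp [litEval])

theorem simRel_iff_isCube_pat (hns : IsNilspace C) (k : ℕ) (x y : X) :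
    simRel C k x y ↔ C (k + 1) (pat x y (k + 1)) := by
  refine ⟨fun ⟨c₀, c₁, h₀, h₁, hx, hy, h⟩ => ?_, fun h => ?_⟩
  · subst hx hy
    exact isCube_pat_of_eqOn_ne_zero hns.1 hns.2.2 h₀ h₁ h
  · exact ⟨_, _, isCube_const hns x _, h, rfl, by simp [pat], fun v hv => by simp [pat, hv]⟩

theorem simRel_refl (hns : IsNilspace C) (k : ℕ) (x : X) : simRel C k x x :=
  ⟨_, _, isCube_const hns x _, isCube_const hns x _, rfl, rfl, fun _ _ => rfl⟩

theorem simRel_symm {k : ℕ} {x y : X} : simRel C k x y → simRel C k y x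
  | ⟨c₀, c₁, h₀, h₁, hx, hy, h⟩ => ⟨c₁, c₀, h₁, h₀, hy, hx, fun v hv => (h v hv).symm⟩

theorem simRel_trans (hns : IsNilspace C) {k : ℕ} {x y z : X} (hxy : simRel C k x y)
    (hyz : simRel C k y z) : simRel C k x z :=
  ⟨_, _, (simRel_iff_isCube_pat hns k y x).mp (simRel_symm hxy),
    (simRel_iff_isCube_pat hns k y z).mp hyz, by simp [pat], by simp [pat],
    fun v hv => by simp [pat, hv]⟩

end Nilspace

theorem stmt16_general {X : Type*} (C : ∀ n, ((Fin n → Bool) → X) → Prop)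
    (hns : IsNilspace C) (k : ℕ) :
    (∀ x y : X, simRel C k x y ↔
        C (k + 1) (fun v : Fin (k + 1) → Bool =>
          if v = (fun _ => false) then y else x)) ∧
    Equivalence (simRel C k) :=
  ⟨Nilspace.simRel_iff_isCube_pat hns k,
    ⟨Nilspace.simRel_refl hns k, Nilspace.simRel_symm, Nilspace.simRel_trans hns⟩⟩

theorem stmt16 {X : Type*} (C : ∀ n, ((Fin n → Bool) → X) → Prop)
    (hns : IsNilspace C) (k : ℕ) (hk : 1 ≤ k) :
    (∀ x y : X, simRel C k x y ↔
        C (k + 1) (fun v : Fin (k + 1) → Bool =>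
          if v = (fun _ => false) then y else x)) ∧
    Equivalence (simRel C k) :=
  stmt16_general C hns k
end

section
/- Let X be a nilspace, A an abelian group, and ρ: C^k(X) → A a cocycle of degree k−1. Then the map ∂ρ: C^{k+1}(X) → A defined by ∂ρ(q) = ρ(q(·,0)) − ρ(q(·,1)) is a cocycle of degree k. -/
open Finset

/-- A (pre)filtration on a group: a decreasing chain of subgroups with
`[G_i, G_j] ⊆ G_{i+j}`. -/
def IsFiltration' {G : Type*} [Group G] (Gf : ℕ → Subgroup G) : Prop :=
  (∀ i, Gf (i + 1) ≤ Gf i) ∧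
  (∀ i j : ℕ, ∀ x ∈ Gf i, ∀ y ∈ Gf j, x⁻¹ * y⁻¹ * x * y ∈ Gf (i + j))

/-- Concatenation of two adjacent `(n+1)`-cubes. -/
def concatCube {X : Type*} {n : ℕ} (q1 q2 : (Fin (n + 1) → Bool) → X) :
    (Fin (n + 1) → Bool) → X :=
  fun v => if v (Fin.last n) then q2 v else q1 v

/-- A cocycle of degree `k` on a nilspace: a function on `(k+1)`-cubes which is
alternating under cube automorphisms and additive on concatenations. -/
def IsCocycle {X A : Type*} [AddCommGroup A] (C : ∀ n, ((Fin n → Bool) → X) → Prop)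
    (k : ℕ) (ρ : ((Fin (k + 1) → Bool) → X) → A) : Prop :=
  (∀ q, C (k + 1) q → ∀ θ : (Fin (k + 1) → Bool) → (Fin (k + 1) → Bool),
      IsCubeMorphism θ → Function.Bijective θ →
      ρ (q ∘ θ) = ((-1 : ℤ) ^ weight (θ fun _ => false)) • ρ q) ∧
  (∀ q1 q2, C (k + 1) q1 → C (k + 1) q2 →
      (∀ v : Fin k → Bool, q1 (Fin.snoc v true) = q2 (Fin.snoc v false)) →
      ρ (concatCube q1 q2) = ρ q1 + ρ q2)

/-!
Additivity of `∂ρ` is immediate: in `∂ρ(q₁) + ∂ρ(q₂)` the two faces shared by the adjacent cubes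
cancel. For the symmetry, an automorphism `θ` of `{0,1}^(k+2)` is a coordinate permutation
followed by reflections; it carries the last coordinate to some coordinate `i` and acts on the
remaining ones by an automorphism `ψ` of `{0,1}^(k+1)`. The alternation of `ρ` under `ψ` turns
`∂ρ(q ∘ θ)` into `± ρ(q|x_i=0) ∓ ρ(q|x_i=1)`, and this difference does not depend on `i`:
restricting `q` to the diagonal `x_i = x_last` gives one map that is a concatenation of two faces
in two ways, so `ρ(q|x_i=0) + ρ(q|x_last=1) = ρ(q|x_last=0) + ρ(q|x_i=1)`.
-/

section CubeMorphism

variable {m n : ℕ}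

lemma cubeEmb_apply (v : Fin n → Bool) (i : Fin n) : cubeEmb v i = (v i).toNat := by
  unfold cubeEmb; cases v i <;> rfl

lemma cubeEmb_false : cubeEmb (fun _ : Fin n => false) = 0 := rfl

lemma cubeEmb_eq_sum_single (v : Fin n → Bool) :
    cubeEmb v = ∑ j ∈ univ.filter (fun j => v j), Pi.single j 1 := by
  ext i
  simp [cubeEmb, Finset.sum_apply, Pi.single_apply]

lemma IsCubeMorphism.comp {l : ℕ} {φ : (Fin m → Bool) → (Fin n → Bool)}
    {ψ : (Fin l → Bool) → (Fin m → Bool)} (hφ : IsCubeMorphism φ) (hψ : IsCubeMorphism ψ) :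
    IsCubeMorphism (φ ∘ ψ) := by
  obtain ⟨M, t, hMt⟩ := hφ
  obtain ⟨N, s, hNs⟩ := hψ
  exact ⟨M.comp N, M s + t, fun v => by simp [hMt, hNs, add_assoc]⟩

lemma isCubeMorphism_comp_right (σ : Fin n → Fin m) :
    IsCubeMorphism (fun v : Fin m → Bool => v ∘ σ) :=
  ⟨⟨⟨fun x => x ∘ σ, rfl⟩, fun _ _ => rfl⟩, 0, fun _ => by simp; rfl⟩

lemma isCubeMorphism_insertNth (i : Fin (n + 1)) (c : Bool) :
    IsCubeMorphism (fun v : Fin n → Bool => i.insertNth c v) := by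
  refine ⟨⟨⟨fun x => i.insertNth 0 x, ?_⟩, fun x y => ?_⟩, Pi.single i c.toNat, fun v => ?_⟩
  all_goals ext j; cases j using Fin.succAboveCases i
  all_goals simp [cubeEmb_apply]

lemma isCubeMorphism_snoc (c : Bool) :
    IsCubeMorphism (fun v : Fin n → Bool => (Fin.snoc v c : Fin (n + 1) → Bool)) := by
  simpa only [Fin.insertNth_last'] using isCubeMorphism_insertNth (Fin.last n) c

end CubeMorphism

section Classification

variable {m n : ℕ}

lemma IsCubeMorphism.exists_coord_sum {θ : (Fin m → Bool) → (Fin n → Bool)}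
    (hθ : IsCubeMorphism θ) :
    ∃ a : Fin n → Fin m → ℤ, ∀ v i, ((θ v i).toNat : ℤ) =
      ∑ j ∈ univ.filter (fun j => v j), a i j + (θ (fun _ => false) i).toNat := by
  obtain ⟨M, t, hMt⟩ := hθ
  have ht : t = cubeEmb (θ fun _ => false) := by
    simpa [cubeEmb_false] using (hMt fun _ => false).symm
  refine ⟨fun i j => M (Pi.single j 1) i, fun v i => ?_⟩
  have := congrFun (hMt v) i
  rw [cubeEmb_eq_sum_single v, map_sum, ht] at this
  simpa [cubeEmb_apply, Finset.sum_apply] using this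

lemma Bool.eq_const_or_eq_xor_of_toNat_eq_sum {f : (Fin m → Bool) → Bool} {a : Fin m → ℤ}
    {b : Bool} (hf : ∀ v, ((f v).toNat : ℤ) = ∑ j ∈ univ.filter (fun j => v j), a j + b.toNat) :
    (∀ v, f v = b) ∨ ∃ j, ∀ v, f v = xor (v j) b := by
  have hS : ∀ S : Finset (Fin m), ((f (· ∈ S)).toNat : ℤ) = ∑ j ∈ S, a j + b.toNat := by
    intro S
    convert hf (· ∈ S) using 3
    ext; simp
  have hval : ∀ j, a j ≠ 0 → a j = 1 - 2 * b.toNat := by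
    intro j hj
    have h := hS {j}
    have := Bool.toNat_le (f (· ∈ ({j} : Finset _)))
    have := Bool.toNat_le b
    rw [Finset.sum_singleton] at h
    omega
  by_cases hzero : ∀ j, a j = 0
  · left
    intro v
    have h := hf v
    rw [Finset.sum_eq_zero fun j _ => hzero j, zero_add] at h
    cases hv : f v <;> cases b <;> simp_all
  · right
    push Not at hzero
    obtain ⟨j, hj⟩ := hzero
    have hother : ∀ l, l ≠ j → a l = 0 := by
      intro l hl
      by_contra hl0
      have h := hS {l, j}
      have := Bool.toNat_le (f (· ∈ ({l, j} : Finset _)))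
      have := Bool.toNat_le b
      rw [Finset.sum_pair hl, hval l hl0, hval j hj] at h
      omega
    refine ⟨j, fun v => ?_⟩
    have h := hf v
    rw [Finset.sum_filter, Fintype.sum_eq_single j fun l hl => by simp [hother l hl],
      hval j hj] at h
    clear hf hS
    cases hv : v j <;> cases hfv : f v <;> cases b <;> simp_all

lemma IsCubeMorphism.exists_eq_xor_of_surjective {θ : (Fin m → Bool) → (Fin n → Bool)}
    (hθ : IsCubeMorphism θ) (hs : Function.Surjective θ) :
    ∃ π : Fin n → Fin m, Function.Injective π ∧
      ∀ v i, θ v i = xor (v (π i)) (θ (fun _ => false) i) := by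
  set ε := θ fun _ => false
  obtain ⟨a, ha⟩ := hθ.exists_coord_sum
  have hlit : ∀ i, ∃ j, ∀ v, θ v i = xor (v j) (ε i) := by
    intro i
    refine (Bool.eq_const_or_eq_xor_of_toNat_eq_sum (ha · i)).resolve_left fun hconst => ?_
    obtain ⟨v, hv⟩ := hs fun _ => !ε i
    exact Bool.not_ne_self _ ((congrFun hv i).symm.trans (hconst v))
  choose π hπ using hlit
  refine ⟨π, fun i₁ i₂ h => ?_, fun v i => hπ i v⟩
  by_contra hne
  obtain ⟨v, hv⟩ := hs (Function.update ε i₁ (!ε i₁))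
  have h₁ := congrFun hv i₁
  have h₂ := congrFun hv i₂
  rw [hπ, h] at h₁
  rw [hπ, Function.update_of_ne (Ne.symm hne)] at h₂
  cases hvp : v (π i₂) <;> simp_all

end Classification

lemma weight_eq_toNat_add_weight_comp_succAbove {n : ℕ} (v : Fin (n + 1) → Bool)
    (i : Fin (n + 1)) : weight v = (v i).toNat + weight (v ∘ i.succAbove) := by
  simp only [weight, Finset.card_filter, Fin.sum_univ_succAbove _ i]
  cases v i <;> simp

lemma Fin.snoc_insertNth {α : Type*} {n : ℕ} (i : Fin (n + 1)) (a b : α) (v : Fin n → α) :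
    (Fin.snoc (i.insertNth a v) b : Fin (n + 2) → α) = i.castSucc.insertNth a (Fin.snoc v b) := by
  ext x
  cases x using Fin.succAboveCases i.castSucc with
  | x => simp
  | p j =>
    rw [Fin.insertNth_apply_succAbove]
    cases j using Fin.lastCases with
    | last =>
      rw [Fin.succAbove_of_le_castSucc _ _ (Fin.castSucc_le_castSucc_iff.mpr (Fin.le_last i))]
      simp
    | cast j => simp [Fin.castSucc_succAbove_castSucc]

lemma comp_finSuccEquiv'_trans_finSuccEquivLast_symm {α : Type*} {n : ℕ} (i : Fin (n + 1))
    (u : Fin (n + 1) → α) :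
    u ∘ (finSuccEquiv' i).trans finSuccEquivLast.symm =
      i.insertNth (u (Fin.last n)) (Fin.init u) := by
  ext x
  cases x using Fin.succAboveCases i <;> simp [Fin.init]

lemma concatCube_eq {X : Type*} {n : ℕ} {q₁ q₂ r : (Fin (n + 1) → Bool) → X}
    (h₁ : ∀ v, q₁ (Fin.snoc v false) = r (Fin.snoc v false))
    (h₂ : ∀ v, q₂ (Fin.snoc v true) = r (Fin.snoc v true)) : concatCube q₁ q₂ = r := by
  ext u
  induction u using Fin.snocCases with
  | snoc v b => cases b <;> simp [concatCube, h₁, h₂]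

section Cocycle

variable {X A : Type*} [AddCommGroup A] {C : ∀ n, ((Fin n → Bool) → X) → Prop} {k : ℕ}
  {ρ : ((Fin (k + 1) → Bool) → X) → A}

def faceDiff {n : ℕ} (ρ : ((Fin n → Bool) → X) → A) (i : Fin (n + 1))
    (q : (Fin (n + 1) → Bool) → X) : A :=
  ρ (fun u => q (i.insertNth false u)) - ρ (fun u => q (i.insertNth true u))

lemma faceDiff_last {n : ℕ} (ρ : ((Fin n → Bool) → X) → A) (q : (Fin (n + 1) → Bool) → X) :
    faceDiff ρ (Fin.last n) q =
      ρ (fun u => q (Fin.snoc u false)) - ρ (fun u => q (Fin.snoc u true)) := by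
  simp only [faceDiff, Fin.insertNth_last']

lemma faceDiff_last_concatCube {n : ℕ} (ρ : ((Fin n → Bool) → X) → A)
    {q₁ q₂ : (Fin (n + 1) → Bool) → X}
    (hadj : ∀ v : Fin n → Bool, q₁ (Fin.snoc v true) = q₂ (Fin.snoc v false)) :
    faceDiff ρ (Fin.last n) (concatCube q₁ q₂) =
      faceDiff ρ (Fin.last n) q₁ + faceDiff ρ (Fin.last n) q₂ := by
  simp only [faceDiff_last, concatCube, Fin.snoc_last, hadj]
  abel

lemma IsCocycle.apply_comp_perm (hρ : IsCocycle C k ρ) {q : (Fin (k + 1) → Bool) → X}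
    (hq : C (k + 1) q) (σ : Equiv.Perm (Fin (k + 1))) : ρ (fun u => q (u ∘ σ)) = ρ q := by
  have hbij : Function.Bijective (fun u : Fin (k + 1) → Bool => u ∘ σ) :=
    (σ.symm.arrowCongr (Equiv.refl Bool)).bijective
  simpa [weight, Function.comp_def] using hρ.1 q hq _ (isCubeMorphism_comp_right σ) hbij

lemma IsCocycle.faceDiff_castSucc_eq_faceDiff_last (hns : IsNilspace C) (hρ : IsCocycle C k ρ)
    {q : (Fin (k + 2) → Bool) → X} (hq : C (k + 2) q) (i : Fin (k + 1)) :
    faceDiff ρ i.castSucc q = faceDiff ρ (Fin.last (k + 1)) q := by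
  set τ := (finSuccEquiv' i).trans finSuccEquivLast.symm
  let face (c : Bool) (u : Fin (k + 1) → Bool) := q (Fin.snoc u c)
  let side (c : Bool) (u : Fin (k + 1) → Bool) := q (i.castSucc.insertNth c u)
  let rot (c : Bool) (u : Fin (k + 1) → Bool) := face c (u ∘ τ)
  have hface (c : Bool) : C (k + 1) (face c) := hns.1 _ _ _ (isCubeMorphism_snoc c) q hq
  have hside (c : Bool) : C (k + 1) (side c) := hns.1 _ _ _ (isCubeMorphism_insertNth _ c) q hq
  have hrot (c : Bool) : C (k + 1) (rot c) :=
    hns.1 _ _ _ (isCubeMorphism_comp_right τ) _ (hface c)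
  have hrot_apply (c b : Bool) (v : Fin k → Bool) :
      rot c (Fin.snoc v b) = q (i.castSucc.insertNth b (Fin.snoc v c)) := by
    simp only [rot, face, τ, comp_finSuccEquiv'_trans_finSuccEquivLast_symm, Fin.snoc_last,
      Fin.init_snoc, Fin.snoc_insertNth]
  -- `D` is `q` on the diagonal `x_i = x_last`: the concatenation of the faces `x_last = 0`
  -- and `x_i = 1`, and also of the faces `x_i = 0` and `x_last = 1`
  let D (u : Fin (k + 1) → Bool) := q (i.castSucc.insertNth (u (Fin.last k)) u)
  have h₁ : ρ D = ρ (rot false) + ρ (side true) := by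
    rw [← hρ.2 _ _ (hrot false) (hside true) fun v => hrot_apply false true v]
    congr 1
    exact (concatCube_eq (fun v => by simp [hrot_apply, D]) (fun v => by simp [side, D])).symm
  have h₂ : ρ D = ρ (side false) + ρ (rot true) := by
    rw [← hρ.2 _ _ (hside false) (hrot true) fun v => (hrot_apply true false v).symm]
    congr 1
    exact (concatCube_eq (fun v => by simp [side, D]) (fun v => by simp [hrot_apply, D])).symm
  have hρrot (c : Bool) : ρ (rot c) = ρ (face c) := hρ.apply_comp_perm (hface c) τ
  rw [faceDiff, faceDiff_last, sub_eq_sub_iff_add_eq_add]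
  change ρ (side false) + ρ (face true) = ρ (face false) + ρ (side true)
  rw [← hρrot, ← hρrot, ← h₁, ← h₂]

lemma IsCocycle.faceDiff_eq_faceDiff_last (hns : IsNilspace C) (hρ : IsCocycle C k ρ)
    {q : (Fin (k + 2) → Bool) → X} (hq : C (k + 2) q) (i : Fin (k + 2)) :
    faceDiff ρ i q = faceDiff ρ (Fin.last (k + 1)) q := by
  cases i using Fin.lastCases with
  | last => rfl
  | cast i => exact hρ.faceDiff_castSucc_eq_faceDiff_last hns hq i

lemma IsCocycle.faceDiff_last_comp (hns : IsNilspace C) (hρ : IsCocycle C k ρ)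
    {q : (Fin (k + 2) → Bool) → X} (hq : C (k + 2) q)
    {θ : (Fin (k + 2) → Bool) → (Fin (k + 2) → Bool)} (hθ : IsCubeMorphism θ)
    (hθb : Function.Bijective θ) :
    faceDiff ρ (Fin.last (k + 1)) (q ∘ θ) =
      ((-1 : ℤ) ^ weight (θ fun _ => false)) • faceDiff ρ (Fin.last (k + 1)) q := by
  obtain ⟨π, hπ, hθπ⟩ := hθ.exists_eq_xor_of_surjective hθb.2
  obtain ⟨i, hi⟩ := Finite.surjective_of_injective hπ (Fin.last (k + 1))
  set ε := θ fun _ => false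
  -- `θ` sends the last coordinate to `i`, reflected if `ε i`, and acts on the others by `ψ`
  let ψ (v : Fin (k + 1) → Bool) : Fin (k + 1) → Bool := θ (Fin.snoc v false) ∘ i.succAbove
  have hθψ (v : Fin (k + 1) → Bool) (b : Bool) :
      θ (Fin.snoc v b) = i.insertNth (xor b (ε i)) (ψ v) := by
    ext x
    cases x using Fin.succAboveCases i with
    | x => simp [hθπ, hi]
    | p j =>
      obtain ⟨l, hl⟩ :=
        Fin.exists_castSucc_eq.mpr fun h => Fin.succAbove_ne i j (hπ (h.trans hi.symm))
      simp [ψ, hθπ, ← hl]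
  have hψ : IsCubeMorphism ψ :=
    (isCubeMorphism_comp_right i.succAbove).comp (hθ.comp (isCubeMorphism_snoc false))
  have hψb : Function.Bijective ψ := by
    refine Finite.injective_iff_bijective.mp fun v w h => ?_
    have := hθψ v false
    rw [h, ← hθψ w false] at this
    exact (Fin.snoc_injective2 (hθb.1 this).symm).1.symm
  have hψ0 : ψ (fun _ => false) = ε ∘ i.succAbove := by
    have : (Fin.snoc (fun _ => false) false : Fin (k + 2) → Bool) = fun _ => false := by
      ext x; cases x using Fin.lastCases <;> simp
    simp only [ψ, ε, this]
  let side (c : Bool) (u : Fin (k + 1) → Bool) := q (i.insertNth c u)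
  have hside (c : Bool) : C (k + 1) (side c) := hns.1 _ _ _ (isCubeMorphism_insertNth i c) q hq
  calc faceDiff ρ (Fin.last (k + 1)) (q ∘ θ)
      = ρ (side (ε i) ∘ ψ) - ρ (side (!ε i) ∘ ψ) := by
        simp [faceDiff_last, hθψ, side, Function.comp_def]
    _ = ((-1 : ℤ) ^ weight (ψ fun _ => false)) • (ρ (side (ε i)) - ρ (side (!ε i))) := by
        rw [hρ.1 _ (hside _) ψ hψ hψb, hρ.1 _ (hside _) ψ hψ hψb, smul_sub]
    _ = ((-1 : ℤ) ^ weight (ψ fun _ => false)) • ((-1 : ℤ) ^ (ε i).toNat • faceDiff ρ i q) := by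
        cases ε i <;> simp [faceDiff, side]
    _ = ((-1 : ℤ) ^ weight ε) • faceDiff ρ (Fin.last (k + 1)) q := by
        rw [hρ.faceDiff_eq_faceDiff_last hns hq, smul_smul, ← pow_add, hψ0, add_comm,
          ← weight_eq_toNat_add_weight_comp_succAbove]

end Cocycle

theorem stmt18 {X A : Type*} [AddCommGroup A] (C : ∀ n, ((Fin n → Bool) → X) → Prop)
    (hns : IsNilspace C) (k : ℕ) (ρ : ((Fin (k + 1) → Bool) → X) → A)
    (hρ : IsCocycle C k ρ) :
    IsCocycle C (k + 1)
      (fun q : (Fin (k + 2) → Bool) → X =>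
        ρ (fun v => q (Fin.snoc v false)) - ρ (fun v => q (Fin.snoc v true))) := by
  have hboundary : (fun q : (Fin (k + 2) → Bool) → X =>
      ρ (fun v => q (Fin.snoc v false)) - ρ (fun v => q (Fin.snoc v true))) =
      faceDiff ρ (Fin.last (k + 1)) := funext fun q => (faceDiff_last ρ q).symm
  rw [hboundary]
  exact ⟨fun q hq θ hθ hθb => hρ.faceDiff_last_comp hns hq hθ hθb,
    fun q₁ q₂ _ _ hadj => faceDiff_last_concatCube ρ hadj⟩
end
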